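/- Euler's second identity: as an identity of formal power series, the sum over n ≥ 0 of q^{n(n−1)/2} x^n / ((1−q)(1−q^2)⋯(1−q^n)) equals the infinite product ∏_{j≥0}(1 + x q^j). -/

import Mathlib

/-!
Let `tₙ(x) = q^(n choose 2) xⁿ / (q;q)ₙ` and `S(x) = ∑ tₙ(x)`, an entire series when `‖q‖ < 1`.
Since `tₙ(qx) = qⁿ tₙ(x)` and `(1 - qⁿ⁺¹) tₙ₊₁(x) = qⁿ x tₙ(x)`, termwise
`tₙ₊₁(x) = tₙ₊₁(qx) + x tₙ(qx)`, i.e. `S(x) = (1 + x) S(qx)`, hence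
`S(x) = (∏_{j<N} (1 + x qʲ)) S(qᴺ x)` for every `N`. As `N → ∞`, `qᴺ x → 0`, and `S` is continuous
at `0` with `S(0) = 1` (dominated convergence, the terms at `‖y‖ ≤ 1` being bounded by `‖tₙ(1)‖`),
so the partial products converge to `S(x)`.
-/

open Filter Topology Finset

variable {K : Type*} [NormedField K] {q : K}

noncomputable def eulerTerm (q x : K) (n : ℕ) : K :=
  q ^ (n * (n - 1) / 2) * x ^ n / ∏ j ∈ range n, (1 - q ^ (j + 1))

noncomputable def eulerSum (q x : K) : K :=
  ∑' n, eulerTerm q x n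

lemma one_sub_norm_le_norm_one_sub_pow (hq : ‖q‖ ≤ 1) {m : ℕ} (hm : m ≠ 0) :
    1 - ‖q‖ ≤ ‖1 - q ^ m‖ :=
  calc 1 - ‖q‖ ≤ ‖(1 : K)‖ - ‖q ^ m‖ := by
        rw [norm_one, norm_pow]
        exact sub_le_sub_left (pow_le_of_le_one (norm_nonneg q) hq hm) 1
    _ ≤ ‖1 - q ^ m‖ := norm_sub_norm_le _ _

lemma one_sub_pow_ne_zero (hq : ‖q‖ < 1) {m : ℕ} (hm : m ≠ 0) : 1 - q ^ m ≠ 0 :=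
  norm_pos_iff.mp ((sub_pos.mpr hq).trans_le (one_sub_norm_le_norm_one_sub_pow hq.le hm))

lemma eulerTerm_zero_right (q x : K) : eulerTerm q x 0 = 1 := by
  simp [eulerTerm]

lemma eulerTerm_mul_left (q x y : K) (n : ℕ) :
    eulerTerm q (y * x) n = y ^ n * eulerTerm q x n := by
  simp only [eulerTerm, mul_pow]
  ring

lemma continuous_eulerTerm (q : K) (n : ℕ) : Continuous fun x ↦ eulerTerm q x n := by
  unfold eulerTerm
  fun_prop

lemma one_sub_pow_mul_eulerTerm_succ (hq : ‖q‖ < 1) (x : K) (n : ℕ) :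
    (1 - q ^ (n + 1)) * eulerTerm q x (n + 1) = q ^ n * x * eulerTerm q x n := by
  have hprod : ∏ j ∈ range n, (1 - q ^ (j + 1)) ≠ 0 :=
    prod_ne_zero_iff.mpr fun j _ ↦ one_sub_pow_ne_zero hq j.succ_ne_zero
  rw [eulerTerm, eulerTerm, prod_range_succ, Nat.triangle_succ]
  field_simp [hprod, one_sub_pow_ne_zero hq n.succ_ne_zero]
  ring

lemma norm_eulerTerm_succ_le (hq : ‖q‖ < 1) (x : K) (n : ℕ) :
    ‖eulerTerm q x (n + 1)‖ ≤ ‖q‖ ^ n * ‖x‖ / (1 - ‖q‖) * ‖eulerTerm q x n‖ := by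
  have h := congrArg norm (one_sub_pow_mul_eulerTerm_succ hq x n)
  rw [norm_mul, norm_mul, norm_mul, norm_pow] at h
  rw [div_mul_eq_mul_div, le_div_iff₀ (sub_pos.mpr hq), ← h, mul_comm]
  gcongr
  exact one_sub_norm_le_norm_one_sub_pow hq.le n.succ_ne_zero

lemma summable_norm_eulerTerm (hq : ‖q‖ < 1) (x : K) :
    Summable fun n ↦ ‖eulerTerm q x n‖ := by
  have hratio : Tendsto (fun n ↦ ‖q‖ ^ n * ‖x‖ / (1 - ‖q‖)) atTop (𝓝 0) := by
    simpa using ((tendsto_pow_atTop_nhds_zero_of_lt_one (norm_nonneg q) hq).mul_const ‖x‖).div_const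
      (1 - ‖q‖)
  refine summable_of_ratio_norm_eventually_le (r := 1 / 2) (by norm_num) ?_
  filter_upwards [hratio.eventually_le_const (by norm_num : (0 : ℝ) < 1 / 2)] with n hn
  simp only [norm_norm]
  exact (norm_eulerTerm_succ_le hq x n).trans (by gcongr)

variable [CompleteSpace K]

lemma eulerSum_eq_one_add_mul (hq : ‖q‖ < 1) (x : K) :
    eulerSum q x = (1 + x) * eulerSum q (q * x) := by
  have hx := (summable_norm_eulerTerm hq x).of_norm
  have hqx := (summable_norm_eulerTerm hq (q * x)).of_norm
  have hterm (n : ℕ) : eulerTerm q x (n + 1)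
      = eulerTerm q (q * x) (n + 1) + x * eulerTerm q (q * x) n := by
    rw [eulerTerm_mul_left, eulerTerm_mul_left]
    linear_combination one_sub_pow_mul_eulerTerm_succ hq x n
  rw [eulerSum, eulerSum, hx.tsum_eq_zero_add, hqx.tsum_eq_zero_add, tsum_congr hterm,
    ((summable_nat_add_iff 1).mpr hqx).tsum_add (hqx.mul_left x), tsum_mul_left,
    hqx.tsum_eq_zero_add, eulerTerm_zero_right, eulerTerm_zero_right]
  ring

lemma eulerSum_eq_prod_mul (hq : ‖q‖ < 1) (x : K) (N : ℕ) :
    eulerSum q x = (∏ j ∈ range N, (1 + x * q ^ j)) * eulerSum q (q ^ N * x) := by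
  induction N with
  | zero => simp
  | succ N ih =>
    rw [ih, eulerSum_eq_one_add_mul hq, prod_range_succ, ← mul_assoc q, ← pow_succ']
    ring

lemma tendsto_eulerSum_nhds_zero (hq : ‖q‖ < 1) : Tendsto (eulerSum q) (𝓝 0) (𝓝 1) := by
  have hbound : ∀ᶠ y in 𝓝 (0 : K), ∀ n, ‖eulerTerm q y n‖ ≤ ‖eulerTerm q 1 n‖ := by
    filter_upwards [Metric.closedBall_mem_nhds (0 : K) one_pos] with y hy n
    rw [← mul_one y, eulerTerm_mul_left, norm_mul, norm_pow]
    exact mul_le_of_le_one_left (norm_nonneg _) (pow_le_one₀ (norm_nonneg y) (by simpa using hy))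
  have h := tendsto_tsum_of_dominated_convergence (summable_norm_eulerTerm hq 1)
    (fun n ↦ (continuous_eulerTerm q n).tendsto 0) hbound
  rwa [tsum_eq_single 0 fun n hn ↦ by simp [eulerTerm, hn], eulerTerm_zero_right] at h

lemma multipliable_one_add_mul_pow (hq : ‖q‖ < 1) (x : K) :
    Multipliable fun j : ℕ ↦ 1 + x * q ^ j := by
  refine multipliable_one_add_of_summable ?_
  simpa [norm_mul, norm_pow] using
    (summable_geometric_of_lt_one (norm_nonneg q) hq).mul_left ‖x‖

theorem eulerSum_eq_tprod (hq : ‖q‖ < 1) (x : K) :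
    eulerSum q x = ∏' j : ℕ, (1 + x * q ^ j) := by
  have hprod := (multipliable_one_add_mul_pow hq x).hasProd.tendsto_prod_nat
  have htail : Tendsto (fun N ↦ eulerSum q (q ^ N * x)) atTop (𝓝 1) :=
    (tendsto_eulerSum_nhds_zero hq).comp
      (by simpa using (tendsto_pow_atTop_nhds_zero_of_norm_lt_one hq).mul_const x)
  have hlim := hprod.mul htail
  rw [mul_one] at hlim
  exact tendsto_nhds_unique (tendsto_const_nhds.congr (eulerSum_eq_prod_mul hq x)) hlim

/-- Euler's second identity: for `‖q‖ < 1` and any `x`,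
`∑_{n≥0} q^{n(n−1)/2} xⁿ/(q;q)_n = (−x;q)_∞ = ∏_{j≥0} (1 + x qʲ)`. -/
theorem stmt14 (x q : ℂ) (hq : ‖q‖ < 1) :
    ∑' n : ℕ, q ^ (n * (n - 1) / 2) * x ^ n
        / (∏ j ∈ Finset.range n, (1 - q ^ (j + 1)))
      = ∏' j : ℕ, (1 + x * q ^ j) :=
  eulerSum_eq_tprod hq x
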